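/- arXiv:1909.02712 — 2 statements merged into one kernel-verified Lean document; each statement's English description precedes it below -/
import Mathlib

section
/- For all $\rho \in [0,1)$, the quantity $\theta = \frac{2\rho^2}{1+\rho^2} + \frac{2\rho^2 s^2}{1-\rho^2} + \frac{2\rho s\sqrt{\rho^2 s^2 + 2(1+\rho)^2}}{1-\rho^2}$, where $s = \frac{(1-\rho)^2}{(1+\rho)^2}$, satisfies $\theta \le \frac{\sqrt{\rho}+\rho}{1+\rho} < 1$. -/
theorem stmt_4 (ρ : ℝ) (hρ0 : 0 ≤ ρ) (hρ1 : ρ < 1) :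
    (2 * ρ ^ 2 / (1 + ρ ^ 2)
      + 2 * ρ ^ 2 * ((1 - ρ) ^ 2 / (1 + ρ) ^ 2) ^ 2 / (1 - ρ ^ 2)
      + 2 * ρ * ((1 - ρ) ^ 2 / (1 + ρ) ^ 2) *
          Real.sqrt (ρ ^ 2 * ((1 - ρ) ^ 2 / (1 + ρ) ^ 2) ^ 2 + 2 * (1 + ρ) ^ 2)
        / (1 - ρ ^ 2))
      ≤ (Real.sqrt ρ + ρ) / (1 + ρ) ∧ (Real.sqrt ρ + ρ) / (1 + ρ) < 1 := by
  obtain ⟨t, ht0, rfl⟩ : ∃ t : ℝ, 0 ≤ t ∧ ρ = t ^ 2 :=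
    ⟨Real.sqrt ρ, Real.sqrt_nonneg ρ, (Real.sq_sqrt hρ0).symm⟩
  have ht1 : t < 1 := by nlinarith
  rw [Real.sqrt_sq ht0]
  have p1 : (0:ℝ) < 1 + t ^ 2 := by positivity
  have p2 : (0:ℝ) < 1 - (t ^ 2) ^ 2 := by nlinarith
  have p4 : (0:ℝ) < 1 + (t ^ 2) ^ 2 := by positivity
  have h2 : Real.sqrt 2 ≤ 283 / 200 := by
    nlinarith [Real.sq_sqrt (by norm_num : (0:ℝ) ≤ 2), Real.sqrt_nonneg 2]
  have hsn : 0 ≤ Real.sqrt 2 := Real.sqrt_nonneg 2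
  have hs2 : Real.sqrt 2 ^ 2 = 2 := Real.sq_sqrt (by norm_num)
  have hsnn : (0:ℝ) ≤ (1 - t ^ 2) ^ 2 / (1 + t ^ 2) ^ 2 := by positivity
  have hD : Real.sqrt ((t ^ 2) ^ 2 * ((1 - t ^ 2) ^ 2 / (1 + t ^ 2) ^ 2) ^ 2
        + 2 * (1 + t ^ 2) ^ 2)
      ≤ t ^ 2 * ((1 - t ^ 2) ^ 2 / (1 + t ^ 2) ^ 2) + 283 / 200 * (1 + t ^ 2) := by
    have step1 : Real.sqrt ((t ^ 2) ^ 2 * ((1 - t ^ 2) ^ 2 / (1 + t ^ 2) ^ 2) ^ 2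
          + 2 * (1 + t ^ 2) ^ 2)
        ≤ t ^ 2 * ((1 - t ^ 2) ^ 2 / (1 + t ^ 2) ^ 2) + Real.sqrt 2 * (1 + t ^ 2) := by
      rw [show t ^ 2 * ((1 - t ^ 2) ^ 2 / (1 + t ^ 2) ^ 2) + Real.sqrt 2 * (1 + t ^ 2)
          = Real.sqrt ((t ^ 2 * ((1 - t ^ 2) ^ 2 / (1 + t ^ 2) ^ 2)
              + Real.sqrt 2 * (1 + t ^ 2)) ^ 2) from
        (Real.sqrt_sq (by positivity)).symm]
      apply Real.sqrt_le_sqrt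
      nlinarith [mul_nonneg (mul_nonneg hsn (mul_nonneg (sq_nonneg t) hsnn)) p1.le]
    nlinarith
  constructor
  · have h1t : (0:ℝ) ≤ 1 - t := by linarith
    have hP : (0:ℝ) ≤ 200 * (t ^ 1 * (1 - t) ^ 13) + 2234 * (t ^ 2 * (1 - t) ^ 12)
        + 12008 * (t ^ 3 * (1 - t) ^ 11) + 40312 * (t ^ 4 * (1 - t) ^ 10)
        + 92560 * (t ^ 5 * (1 - t) ^ 9) + 153124 * (t ^ 6 * (1 - t) ^ 8)
        + 195360 * (t ^ 7 * (1 - t) ^ 7) + 210648 * (t ^ 8 * (1 - t) ^ 6)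
        + 197968 * (t ^ 9 * (1 - t) ^ 5) + 147056 * (t ^ 10 * (1 - t) ^ 4)
        + 75008 * (t ^ 11 * (1 - t) ^ 3) + 21984 * (t ^ 12 * (1 - t) ^ 2)
        + 1088 * (t ^ 13 * (1 - t) ^ 1) := by
      repeat' apply add_nonneg
      all_goals
        apply mul_nonneg
        · norm_num
        · exact mul_nonneg (pow_nonneg ht0 _) (pow_nonneg h1t _)
    have hC : (0:ℝ) ≤ (200 * (t ^ 1 * (1 - t) ^ 13) + 2234 * (t ^ 2 * (1 - t) ^ 12)
        + 12008 * (t ^ 3 * (1 - t) ^ 11) + 40312 * (t ^ 4 * (1 - t) ^ 10)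
        + 92560 * (t ^ 5 * (1 - t) ^ 9) + 153124 * (t ^ 6 * (1 - t) ^ 8)
        + 195360 * (t ^ 7 * (1 - t) ^ 7) + 210648 * (t ^ 8 * (1 - t) ^ 6)
        + 197968 * (t ^ 9 * (1 - t) ^ 5) + 147056 * (t ^ 10 * (1 - t) ^ 4)
        + 75008 * (t ^ 11 * (1 - t) ^ 3) + 21984 * (t ^ 12 * (1 - t) ^ 2)
        + 1088 * (t ^ 13 * (1 - t) ^ 1))
        / (200 * (1 + (t ^ 2) ^ 2) * (1 + t ^ 2) ^ 5) :=
      div_nonneg hP (by positivity)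
    have key : (t + t ^ 2) / (1 + t ^ 2)
        - (2 * (t ^ 2) ^ 2 / (1 + (t ^ 2) ^ 2)
          + 2 * (t ^ 2) ^ 2 * ((1 - t ^ 2) ^ 2 / (1 + t ^ 2) ^ 2) ^ 2 / (1 - (t ^ 2) ^ 2)
          + 2 * t ^ 2 * ((1 - t ^ 2) ^ 2 / (1 + t ^ 2) ^ 2) *
              (t ^ 2 * ((1 - t ^ 2) ^ 2 / (1 + t ^ 2) ^ 2) + 283 / 200 * (1 + t ^ 2))
            / (1 - (t ^ 2) ^ 2))
        = (200 * (t ^ 1 * (1 - t) ^ 13) + 2234 * (t ^ 2 * (1 - t) ^ 12)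
        + 12008 * (t ^ 3 * (1 - t) ^ 11) + 40312 * (t ^ 4 * (1 - t) ^ 10)
        + 92560 * (t ^ 5 * (1 - t) ^ 9) + 153124 * (t ^ 6 * (1 - t) ^ 8)
        + 195360 * (t ^ 7 * (1 - t) ^ 7) + 210648 * (t ^ 8 * (1 - t) ^ 6)
        + 197968 * (t ^ 9 * (1 - t) ^ 5) + 147056 * (t ^ 10 * (1 - t) ^ 4)
        + 75008 * (t ^ 11 * (1 - t) ^ 3) + 21984 * (t ^ 12 * (1 - t) ^ 2)
        + 1088 * (t ^ 13 * (1 - t) ^ 1))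
        / (200 * (1 + (t ^ 2) ^ 2) * (1 + t ^ 2) ^ 5) := by
      have hne1 : (1 + t ^ 2) ≠ 0 := ne_of_gt p1
      have hne2 : (1 - (t ^ 2) ^ 2) ≠ 0 := ne_of_gt p2
      have hne3 : (1 + (t ^ 2) ^ 2) ≠ 0 := ne_of_gt p4
      have hne4 : (1 - t ^ 4) ≠ 0 := by rw [← pow_mul] at hne2; exact hne2
      have hne5 : (1 + t ^ 4) ≠ 0 := by rw [← pow_mul] at hne3; exact hne3
      field_simp
      ring
    have final : 2 * (t ^ 2) ^ 2 / (1 + (t ^ 2) ^ 2)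
          + 2 * (t ^ 2) ^ 2 * ((1 - t ^ 2) ^ 2 / (1 + t ^ 2) ^ 2) ^ 2 / (1 - (t ^ 2) ^ 2)
          + 2 * t ^ 2 * ((1 - t ^ 2) ^ 2 / (1 + t ^ 2) ^ 2) *
              (t ^ 2 * ((1 - t ^ 2) ^ 2 / (1 + t ^ 2) ^ 2) + 283 / 200 * (1 + t ^ 2))
            / (1 - (t ^ 2) ^ 2)
        ≤ (t + t ^ 2) / (1 + t ^ 2) := by linarith
    refine le_trans ?_ final
    gcongr
  · rw [div_lt_one p1]
    linarith
end

section
/- Let $W = \begin{pmatrix} 0.5 & 0.5 & 0 \\ 0.5 & 0 & 0.5 \\ 0 & 0.5 & 0.5 \end{pmatrix}$ and for $\gamma \in (0, 0.5)$ define the $6\times 6$ block matrix $H = \begin{pmatrix} (2-\gamma)W & -(1-\gamma)W \\ I & 0 \end{pmatrix}$. Then the spectral radius of $H$ is at least $1$. -/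
theorem stmt_13 (γ : ℝ) (hγ0 : 0 < γ) (hγ1 : γ < 0.5)
    (W : Matrix (Fin 3) (Fin 3) ℝ)
    (hW : W = !![0.5, 0.5, 0; 0.5, 0, 0.5; 0, 0.5, 0.5])
    (H : Matrix (Fin 3 ⊕ Fin 3) (Fin 3 ⊕ Fin 3) ℝ)
    (hH : H = Matrix.fromBlocks ((2 - γ) • W) (-((1 - γ) • W)) 1 0) :
    ∃ μ : ℂ, ∃ v : (Fin 3 ⊕ Fin 3) → ℂ, v ≠ 0 ∧
      (H.map (algebraMap ℝ ℂ)).mulVec v = μ • v ∧ 1 ≤ ‖μ‖ := by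
  set s : ℝ := Real.sqrt (γ^2 - 12*γ + 12) with hs
  have hpos : (0:ℝ) ≤ γ^2 - 12*γ + 12 := by nlinarith
  have hs2 : s^2 = γ^2 - 12*γ + 12 := Real.sq_sqrt hpos
  have hsge : 2 + γ ≤ s := by
    have : (2+γ)^2 ≤ s^2 := by nlinarith
    nlinarith [Real.sqrt_nonneg (γ^2 - 12*γ + 12)]
  set μr : ℝ := -((2-γ)+s)/4 with hμr
  have hq : μr^2 + (2-γ)/2 * μr - (1-γ)/2 = 0 := by
    rw [hμr]; nlinarith [hs2]
  have hqC : (μr:ℂ)^2 + ((2:ℂ)-γ)/2 * μr - ((1:ℂ)-γ)/2 = 0 := by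
    exact_mod_cast congrArg (Complex.ofReal) hq
  refine ⟨(μr:ℂ), Sum.elim (fun i => (μr:ℂ) * ![1,-2,1] i) (fun i => ![1,-2,1] i),
    ?_, ?_, ?_⟩
  · intro h
    have := congrFun h (Sum.inr 0)
    simp at this
  · subst hH hW
    funext i
    cases i with
    | inl i =>
        fin_cases i <;>
        · simp [Matrix.mulVec, dotProduct, Fintype.sum_sum_type,
            Fin.sum_univ_succ, Matrix.fromBlocks]
          norm_num
          first
          | linear_combination (-1:ℂ) * hqC
          | linear_combination (-2:ℂ) * hqC
          | linear_combination (2:ℂ) * hqC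
    | inr i =>
        fin_cases i <;>
        · simp [Matrix.mulVec, dotProduct, Fintype.sum_sum_type,
            Fin.sum_univ_succ, Matrix.fromBlocks, Matrix.one_apply]
  · rw [Complex.norm_real, Real.norm_eq_abs]
    rw [abs_of_nonpos (by nlinarith [Real.sqrt_nonneg (γ^2 - 12*γ + 12)])]
    rw [hμr]; nlinarith
end
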